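/- arXiv:2211.14897 — 7 statements merged into one kernel-verified Lean document; each statement's English description precedes it below -/
import Mathlib

section
/- Let (B, {Ω^e}_{e∈ℰ}) be a model over a finite collection of environments ℰ, let G(B) be the DAG with an edge j → i whenever B_{ij} ≠ 0, and let 𝓘 := { j : ∃ e, f ∈ ℰ with Ω^e_{jj} ≠ Ω^f_{jj} } be the set of intervention targets. If a DAG 𝒟 on [p] is 𝓘-equivalent to G(B), then there exist a DAG matrix B~ compatible with 𝒟 and diagonal matrices {Ω~^e}_{e∈ℰ} with positive diagonal entries such that (I−B)⁻¹ Ω^e (I−B)⁻ᵀ = (I−B~)⁻¹ Ω~^e (I−B~)⁻ᵀ for every e ∈ ℰ. -/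
open Matrix

/-- A matrix is a DAG (connectivity) matrix if it is strictly lower triangular up to a
simultaneous permutation of rows and columns (in particular it has zero diagonal). -/
def IsDagMatrix {p : ℕ} (B : Matrix (Fin p) (Fin p) ℝ) : Prop :=
  ∃ σ : Equiv.Perm (Fin p), ∀ i j : Fin p, σ i ≤ σ j → B i j = 0

/-- A noise-variance matrix: diagonal with positive diagonal entries. -/
def DiagPos {p : ℕ} (Ω : Matrix (Fin p) (Fin p) ℝ) : Prop :=
  Ω.IsDiag ∧ ∀ i, 0 < Ω i i

/-- The covariance matrix `(I − B)⁻¹ Ω (I − B)⁻ᵀ` entailed by the model `(B, Ω)`. -/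
noncomputable def CovOf {p : ℕ} (B Ω : Matrix (Fin p) (Fin p) ℝ) : Matrix (Fin p) (Fin p) ℝ :=
  (1 - B)⁻¹ * Ω * ((1 - B)⁻¹)ᵀ

/-- A directed graph on `[p]` (given as its edge relation, `D a b` meaning `a → b`)
is acyclic if it has no directed cycles. -/
def IsAcyclic {p : ℕ} (D : Fin p → Fin p → Prop) : Prop :=
  ∀ i, ¬ Relation.TransGen D i i

/-- The graph `G(B)` underlying a connectivity matrix `B`: an edge `j → i` whenever
`B i j ≠ 0`. -/
def graphOf {p : ℕ} (B : Matrix (Fin p) (Fin p) ℝ) : Fin p → Fin p → Prop :=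
  fun j i => B i j ≠ 0

/-- A matrix `B` is compatible with a graph `D` (written `B ∼ D`) if `B i j ≠ 0`
implies that `j → i` is an edge of `D`. -/
def Compatible {p : ℕ} (B : Matrix (Fin p) (Fin p) ℝ) (D : Fin p → Fin p → Prop) : Prop :=
  ∀ i j, B i j ≠ 0 → D j i

/-- Two directed graphs have the same skeleton: the same adjacencies ignoring direction. -/
def SameSkeleton {V : Type*} (D D' : V → V → Prop) : Prop :=
  ∀ a b, (D a b ∨ D b a) ↔ (D' a b ∨ D' b a)

/-- `(i, k, j)` is a v-structure: edges `i → k` and `j → k` with `i ≠ j` and `i, j`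
non-adjacent. -/
def IsVStruct {V : Type*} (D : V → V → Prop) (i k j : V) : Prop :=
  D i k ∧ D j k ∧ i ≠ j ∧ ¬ D i j ∧ ¬ D j i

/-- Two directed graphs have the same v-structures. -/
def SameVStructs {V : Type*} (D D' : V → V → Prop) : Prop :=
  ∀ i k j, IsVStruct D i k j ↔ IsVStruct D' i k j

/-- `𝓘`-equivalence of two DAGs: same skeleton, same v-structures, and the same parents
for every node in `𝓘`. -/
def IEquiv {p : ℕ} (I : Set (Fin p)) (D D' : Fin p → Fin p → Prop) : Prop :=
  SameSkeleton D D' ∧ SameVStructs D D' ∧ ∀ i ∈ I, ∀ j, D j i ↔ D' j i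

/-!
By Chickering's transformational characterization, as long as the current graph `G` and `𝒟`
disagree on the direction of an edge, some disagreeing edge `x → y` is covered in `G`
(`pa(y) = pa(x) ∪ {x}`); reversing it keeps acyclicity, the skeleton and the v-structures and
removes one disagreement. As `G` and `𝒟` give the same parents to the intervention targets, neither
`x` nor `y` is one, so their noise variances `ω_x`, `ω_y` are the same in every environment.

The reversal is realized on the model by a change of noise coordinates `T` acting on `x` and `y`
only: `B' = I - T (I - B)` and `Ω'ᵉ = T Ωᵉ Tᵀ` entail the same covariances, `B'` is compatible with
the reversed graph, and the coefficients of `T` can be chosen (from `B_yx`, `ω_x`, `ω_y` alone) so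
that every `Ω'ᵉ` is again diagonal with environment-independent entries at `x` and `y`.
-/

section Acyclic

variable {p : ℕ} {R S : Fin p → Fin p → Prop}

lemma IsAcyclic.mono (hS : IsAcyclic S) (h : ∀ a b, R a b → S a b) : IsAcyclic R :=
  fun i hi => hS i (Relation.TransGen.mono h i i hi)

lemma IsAcyclic.irrefl (hR : IsAcyclic R) (a : Fin p) : ¬R a a :=
  fun h => hR a (.single h)

lemma IsAcyclic.asymm (hR : IsAcyclic R) {a b : Fin p} (hab : R a b) : ¬R b a :=
  fun h => hR a ((Relation.TransGen.single hab).tail h)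

lemma IsAcyclic.not_cycle₃ (hR : IsAcyclic R) {a b c : Fin p} (hab : R a b) (hbc : R b c) :
    ¬R c a :=
  fun h => hR a (((Relation.TransGen.single hab).tail hbc).tail h)

lemma isAcyclic_of_rank {α : Type*} [Preorder α] (f : Fin p → α) (hf : ∀ a b, R a b → f a < f b) :
    IsAcyclic R := by
  have key : ∀ a b, Relation.TransGen R a b → f a < f b := by
    intro a b h
    induction h with
    | single h => exact hf _ _ h
    | tail _ h ih => exact ih.trans (hf _ _ h)
  exact fun a h => lt_irrefl _ (key a a h)

lemma IsAcyclic.exists_rank (hR : IsAcyclic R) : ∃ f : Fin p → ℕ, ∀ a b, R a b → f a < f b := by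
  classical
  refine ⟨fun a => (Finset.univ.filter fun c => Relation.TransGen R c a).card,
    fun a b hab => Finset.card_lt_card ?_⟩
  refine (Finset.ssubset_iff_of_subset fun c hc => ?_).mpr ⟨a, ?_, ?_⟩
  · simp only [Finset.mem_filter, Finset.mem_univ, true_and] at hc ⊢
    exact hc.tail hab
  · simpa using Relation.TransGen.single hab
  · simpa using hR a

end Acyclic

lemma Fin.exists_perm_lt_of_lt {p : ℕ} {α : Type*} [LinearOrder α] (f : Fin p → α) :
    ∃ σ : Equiv.Perm (Fin p), ∀ a b, f a < f b → σ a < σ b :=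
  ⟨(Tuple.sort f)⁻¹, fun a b h => (Tuple.monotone_sort f).reflect_lt (by simpa using h)⟩

section DagMatrix

variable {p : ℕ} {B : Matrix (Fin p) (Fin p) ℝ}

lemma isDagMatrix_iff_isAcyclic_graphOf : IsDagMatrix B ↔ IsAcyclic (graphOf B) := by
  constructor
  · rintro ⟨σ, hσ⟩
    exact isAcyclic_of_rank σ fun j i hij => not_le.mp fun h => hij (hσ i j h)
  · intro h
    obtain ⟨f, hf⟩ := h.exists_rank
    obtain ⟨σ, hσ⟩ := Fin.exists_perm_lt_of_lt f
    exact ⟨σ, fun i j hij => not_not.mp fun h => (hσ j i (hf j i h)).not_ge hij⟩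

lemma IsDagMatrix.det_one_sub (hB : IsDagMatrix B) : (1 - B).det = 1 := by
  obtain ⟨σ, hσ⟩ := hB
  have htri : (1 - B).BlockTriangular (OrderDual.toDual ∘ σ) := fun i j (hij : σ i < σ j) => by
    simp [one_apply, σ.injective.ne_iff.mp hij.ne, hσ i j hij.le]
  have hdiag : ∀ i, B i i = 0 := fun i => hσ i i le_rfl
  have hlow : ((1 - B).submatrix σ.symm σ.symm).IsLowerTriangular := by
    simpa [Function.comp_def] using htri.submatrix (f := σ.symm)
  rw [← det_submatrix_equiv_self σ.symm, det_of_isLowerTriangular _ hlow]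
  simp [hdiag]

lemma Compatible.isDagMatrix {G : Fin p → Fin p → Prop} (hB : Compatible B G)
    (hG : IsAcyclic G) : IsDagMatrix B :=
  isDagMatrix_iff_isAcyclic_graphOf.mpr (hG.mono fun j i hij => hB i j hij)

end DagMatrix

section CoveredEdge

variable {p : ℕ} {G D : Fin p → Fin p → Prop} {x y : Fin p}

def IsCoveredEdge (G : Fin p → Fin p → Prop) (x y : Fin p) : Prop :=
  G x y ∧ ∀ z, G z y ↔ G z x ∨ z = x

def reverseEdge (G : Fin p → Fin p → Prop) (x y : Fin p) : Fin p → Fin p → Prop :=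
  fun a b => (G a b ∧ ¬(a = x ∧ b = y)) ∨ (a = y ∧ b = x)

lemma parent_head_of_parent_tail (hG : IsAcyclic G) (hskel : SameSkeleton G D)
    (hvs : SameVStructs G D) {f : Fin p → ℕ} (hf : ∀ a b, G a b → f a < f b)
    (hxy : G x y) (hyx : D y x) (hmin : ∀ a b, G a b → D b a → f y ≤ f b)
    {z : Fin p} (hzx : G z x) : G z y := by
  by_contra hzy
  have hnyz : ¬G y z := fun h => hG.not_cycle₃ hzx hxy h
  have hzy' : z ≠ y := fun h => hG.asymm hxy (h ▸ hzx)
  have hnD : ¬(D z y ∨ D y z) := by rw [← hskel]; tauto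
  rcases (hskel z x).mp (Or.inl hzx) with hDzx | hDxz
  · exact hG.asymm hxy ((hvs z x y).mpr ⟨hDzx, hyx, hzy', fun h => hnD (.inl h),
      fun h => hnD (.inr h)⟩).2.1
  · exact (hf x y hxy).not_ge (hmin z x hzx hDxz)

lemma parent_tail_of_parent_head (hD : IsAcyclic D) (hskel : SameSkeleton G D)
    (hvs : SameVStructs G D) {f : Fin p → ℕ} (hf : ∀ a b, G a b → f a < f b)
    (hxy : G x y) (hyx : D y x) (hmin : ∀ a b, G a b → D b a → f y ≤ f b)
    (hmax : ∀ z, G z y → D y z → f z ≤ f x) {z : Fin p} (hzy : G z y) (hzx : z ≠ x) :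
    G z x := by
  by_contra hnzx
  by_cases hxz : G x z
  · rcases (hskel z y).mp (Or.inl hzy) with hDzy | hDyz
    · rcases (hskel x z).mp (Or.inl hxz) with hDxz | hDzx
      · exact hD.not_cycle₃ hDxz hDzy hyx
      · exact (hf z y hzy).not_ge (hmin x z hxz hDzx)
    · exact (hf x z hxz).not_ge (hmax z hzy hDyz)
  · exact hD.asymm ((hvs z y x).mp ⟨hzy, hxy, hzx, hnzx, hxz⟩).2.1 hyx

/-- Chickering's lemma. Among the disagreeing edges `x → y`, take `y` lowest and then `x` highest
in a topological order of `G`. -/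
lemma exists_isCoveredEdge_of_disagree (hG : IsAcyclic G) (hD : IsAcyclic D)
    (hskel : SameSkeleton G D) (hvs : SameVStructs G D) {a b : Fin p} (hab : G a b)
    (hba : D b a) : ∃ x y, IsCoveredEdge G x y ∧ D y x := by
  obtain ⟨f, hf⟩ := hG.exists_rank
  obtain ⟨y, ⟨x₀, hx₀⟩, hymin⟩ := Set.exists_min_image {y | ∃ x, G x y ∧ D y x} f
    (Set.toFinite _) ⟨b, a, hab, hba⟩
  obtain ⟨x, ⟨hxy, hyx⟩, hxmax⟩ := Set.exists_max_image {x | G x y ∧ D y x} f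
    (Set.toFinite _) ⟨x₀, hx₀⟩
  have hmin : ∀ a b, G a b → D b a → f y ≤ f b := fun a b hab hba => hymin b ⟨a, hab, hba⟩
  refine ⟨x, y, ⟨hxy, fun z => ⟨fun hzy => ?_, ?_⟩⟩, hyx⟩
  · by_cases hzx : z = x
    · exact .inr hzx
    · exact .inl (parent_tail_of_parent_head hD hskel hvs hf hxy hyx hmin
        (fun z hzy hyz => hxmax z ⟨hzy, hyz⟩) hzy hzx)
  · rintro (hzx | rfl)
    · exact parent_head_of_parent_tail hG hskel hvs hf hxy hyx hmin hzx
    · exact hxy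

lemma IsCoveredEdge.ne (hxy : IsCoveredEdge G x y) (hG : IsAcyclic G) : x ≠ y :=
  fun h => hG.irrefl y (h ▸ hxy.1)

lemma IsCoveredEdge.isAcyclic_reverseEdge (hxy : IsCoveredEdge G x y) (hG : IsAcyclic G) :
    IsAcyclic (reverseEdge G x y) := by
  obtain ⟨f, hf⟩ := hG.exists_rank
  have hfxy := hf x y hxy.1
  -- `y` moves to just below `x` in the doubled ranking
  refine isAcyclic_of_rank (fun a => if a = y then 2 * f x else 2 * f a + 1) ?_
  rintro a b (⟨hab, hne⟩ | ⟨ha, hb⟩)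
  · have := hf a b hab
    split_ifs with ha hb hb
    · exact absurd hab (ha ▸ hb ▸ hG.irrefl y)
    · subst ha
      omega
    · have hax : G a x := ((hxy.2 a).mp (hb ▸ hab)).resolve_right fun h => hne ⟨h, hb⟩
      have := hf a x hax
      omega
    · omega
  · simp [ha, hb, hxy.ne hG]

lemma sameSkeleton_reverseEdge (hxy : G x y) : SameSkeleton G (reverseEdge G x y) := by
  intro a b
  unfold reverseEdge
  by_cases hax : a = x <;> by_cases hby : b = y <;> by_cases hay : a = y <;> by_cases hbx : b = x <;>
    subst_vars <;> tauto

lemma IsCoveredEdge.sameVStructs_reverseEdge (hxy : IsCoveredEdge G x y) :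
    SameVStructs G (reverseEdge G x y) := by
  have hadj := sameSkeleton_reverseEdge hxy.1
  intro i k j
  constructor
  · rintro ⟨hik, hjk, hij, hnij, hnji⟩
    have hnadj : ¬(reverseEdge G x y i j ∨ reverseEdge G x y j i) := by rw [← hadj]; tauto
    have hik' : ¬(i = x ∧ k = y) := by
      rintro ⟨rfl, rfl⟩
      exact hnji (((hxy.2 j).mp hjk).resolve_right hij.symm)
    have hjk' : ¬(j = x ∧ k = y) := by
      rintro ⟨rfl, rfl⟩
      exact hnij (((hxy.2 i).mp hik).resolve_right hij)
    exact ⟨.inl ⟨hik, hik'⟩, .inl ⟨hjk, hjk'⟩, hij, fun h => hnadj (.inl h),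
      fun h => hnadj (.inr h)⟩
  · rintro ⟨hik, hjk, hij, hnij, hnji⟩
    have hnadj : ¬(G i j ∨ G j i) := by rw [hadj]; tauto
    have key : ∀ {i j}, reverseEdge G x y i k → reverseEdge G x y j k → i ≠ j →
        ¬(G i j ∨ G j i) → G i k := by
      rintro i j (⟨h, -⟩ | ⟨hi, hk⟩) hjk hij hnadj
      · exact h
      rcases hjk with ⟨hjk, -⟩ | ⟨hj, -⟩
      · exact absurd (.inr (hi ▸ (hxy.2 j).mpr (.inl (hk ▸ hjk)))) hnadj
      · exact absurd (hi.trans hj.symm) hij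
    exact ⟨key hik hjk hij hnadj, key hjk hik hij.symm (by tauto), hij,
      fun h => hnadj (.inl h), fun h => hnadj (.inr h)⟩

lemma reverseEdge_iff_of_ne {a b : Fin p} (hbx : b ≠ x) (hby : b ≠ y) :
    reverseEdge G x y a b ↔ G a b := by
  simp [reverseEdge, hbx, hby]

lemma IsCoveredEdge.iEquiv_reverseEdge {I : Set (Fin p)} (hxy : IsCoveredEdge G x y)
    (h : IEquiv I G D) (hx : x ∉ I) (hy : y ∉ I) : IEquiv I (reverseEdge G x y) D :=
  ⟨fun a b => (sameSkeleton_reverseEdge hxy.1 a b).symm.trans (h.1 a b),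
    fun i k j => (hxy.sameVStructs_reverseEdge i k j).symm.trans (h.2.1 i k j),
    fun i hi j => (reverseEdge_iff_of_ne (ne_of_mem_of_not_mem hi hx)
      (ne_of_mem_of_not_mem hi hy)).trans (h.2.2 i hi j)⟩

lemma IEquiv.notMem_of_disagree {I : Set (Fin p)} (h : IEquiv I G D) (hG : IsAcyclic G)
    (hD : IsAcyclic D) (hxy : G x y) (hyx : D y x) : x ∉ I ∧ y ∉ I :=
  ⟨fun hx => hG.asymm hxy ((h.2.2 x hx y).mpr hyx),
    fun hy => hD.asymm hyx ((h.2.2 y hy x).mp hxy)⟩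

open Classical in
noncomputable def disagreements (G D : Fin p → Fin p → Prop) : Finset (Fin p × Fin p) :=
  Finset.univ.filter fun e => G e.1 e.2 ∧ D e.2 e.1

lemma mem_disagreements {e : Fin p × Fin p} : e ∈ disagreements G D ↔ G e.1 e.2 ∧ D e.2 e.1 := by
  simp [disagreements]

lemma card_disagreements_reverseEdge_lt (hD : IsAcyclic D) (hxy : G x y) (hyx : D y x) :
    (disagreements (reverseEdge G x y) D).card < (disagreements G D).card := by
  refine Finset.card_lt_card <| (Finset.ssubset_iff_of_subset fun e he => ?_).mpr
    ⟨(x, y), mem_disagreements.mpr ⟨hxy, hyx⟩, fun h => ?_⟩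
  · obtain ⟨⟨hG, -⟩ | ⟨h1, h2⟩, hDe⟩ := mem_disagreements.mp he
    · exact mem_disagreements.mpr ⟨hG, hDe⟩
    · exact absurd (h1 ▸ h2 ▸ hDe) (hD.asymm hyx)
  · obtain ⟨⟨-, hne⟩ | ⟨h1, -⟩, -⟩ := mem_disagreements.mp h
    · exact hne ⟨rfl, rfl⟩
    · exact hD.irrefl y (by simpa [← show x = y from h1] using hyx)

end CoveredEdge

section Reversal

variable {p : ℕ} {x y : Fin p}

def reversalMatrix (x y : Fin p) (b q r : ℝ) : Matrix (Fin p) (Fin p) ℝ :=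
  ((1 : Matrix (Fin p) (Fin p) ℝ).updateRow x (Pi.single x q - Pi.single y r)).updateRow y
    (Pi.single x b + Pi.single y 1)

lemma reversalMatrix_mul (b q r : ℝ) (M : Matrix (Fin p) (Fin p) ℝ) :
    reversalMatrix x y b q r * M =
      (M.updateRow x (q • M x - r • M y)).updateRow y (b • M x + M y) := by
  simp [reversalMatrix, updateRow_mul, sub_vecMul, add_vecMul]
  rfl

lemma reversalMatrix_mul_diagonal_mul_transpose (hxy : x ≠ y) {b q r : ℝ} (d : Fin p → ℝ)
    (h : q * b * d x = r * d y) :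
    reversalMatrix x y b q r * diagonal d * (reversalMatrix x y b q r)ᵀ =
      diagonal (Function.update (Function.update d x (q ^ 2 * d x + r ^ 2 * d y)) y
        (b ^ 2 * d x + d y)) := by
  rw [← transpose_transpose (_ * (reversalMatrix x y b q r)ᵀ), transpose_mul, transpose_transpose,
    reversalMatrix_mul, reversalMatrix_mul]
  ext i j
  simp only [transpose_apply, updateRow_apply, diagonal_apply, Function.update_apply, Pi.add_apply,
    Pi.sub_apply, Pi.smul_apply, smul_eq_mul]
  split_ifs <;> simp_all <;> first | ring1 | linear_combination h

lemma IsCoveredEdge.compatible_one_sub_reversalMatrix_mul {G : Fin p → Fin p → Prop}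
    {B : Matrix (Fin p) (Fin p) ℝ} {q r : ℝ} (hxy : IsCoveredEdge G x y) (hG : IsAcyclic G)
    (hB : Compatible B G) (hqr : q + r * B y x = 1) :
    Compatible (1 - reversalMatrix x y (B y x) q r * (1 - B)) (reverseEdge G x y) := by
  have hBxx : B x x = 0 := not_not.mp fun h => hG.irrefl x (hB x x h)
  have hpa : ∀ j, j ≠ x → B x j ≠ 0 ∨ B y j ≠ 0 → G j x ∧ G j y := by
    intro j hj h
    have := hxy.2 j
    rcases h with h | h <;> have := hB _ _ h <;> tauto
  intro i j hij
  simp only [reversalMatrix_mul, Matrix.sub_apply, updateRow_apply, one_apply, Pi.add_apply,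
    Pi.sub_apply, Pi.smul_apply, smul_eq_mul] at hij
  by_cases hiy : i = y
  · subst i
    by_cases hjx : x = j
    · subst j; simp [hBxx] at hij
    have hBj : B x j ≠ 0 ∨ B y j ≠ 0 := by
      by_contra! h
      simp [h.1, h.2, hjx] at hij
    exact .inl ⟨(hpa j (Ne.symm hjx) hBj).2, fun h => hjx h.1.symm⟩
  by_cases hix : i = x
  · subst i
    by_cases hjx : x = j
    · subst j
      simp [hBxx, hiy, Ne.symm hiy, hqr] at hij
    by_cases hjy : y = j
    · exact .inr ⟨hjy.symm, rfl⟩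
    have hBj : B x j ≠ 0 ∨ B y j ≠ 0 := by
      by_contra! h
      simp [h.1, h.2, hjx, hjy] at hij
    exact .inl ⟨(hpa j (Ne.symm hjx) hBj).1, fun h => hjx h.1.symm⟩
  · simp [hix, hiy] at hij
    exact .inl ⟨hB _ _ hij, fun h => hiy h.2⟩

end Reversal

lemma det_eq_one_of_isDagMatrix_one_sub_mul_one_sub {p : ℕ} {T B : Matrix (Fin p) (Fin p) ℝ}
    (hB : IsDagMatrix B) (hTB : IsDagMatrix (1 - T * (1 - B))) : T.det = 1 := by
  have := congrArg det (sub_sub_cancel 1 (T * (1 - B)))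
  rwa [det_mul, hB.det_one_sub, mul_one, hTB.det_one_sub, eq_comm] at this

lemma covOf_one_sub_mul_one_sub {p : ℕ} {T : Matrix (Fin p) (Fin p) ℝ} (hT : IsUnit T.det)
    (B Ω : Matrix (Fin p) (Fin p) ℝ) :
    CovOf (1 - T * (1 - B)) (T * Ω * Tᵀ) = CovOf B Ω := by
  have hTt : IsUnit Tᵀ.det := isUnit_det_transpose T hT
  rw [CovOf, CovOf, sub_sub_cancel, Matrix.mul_inv_rev, transpose_mul, transpose_nonsing_inv T]
  simp only [Matrix.mul_assoc, nonsing_inv_mul_cancel_left T _ hT,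
    mul_nonsing_inv_cancel_left Tᵀ _ hTt]

section Model

variable {p : ℕ} {E : Type*}

/-- For independent noises `εₓ`, `ε_y` of variances `ωx`, `ωy`, `r` is the regression coefficient of
`εₓ` on `b εₓ + ε_y` and `q = 1 - r b`, so that `q εₓ - r ε_y` and `b εₓ + ε_y` are uncorrelated. -/
lemma exists_reversal_coeffs (b : ℝ) {ωx ωy : ℝ} (hωx : 0 < ωx) (hωy : 0 < ωy) :
    ∃ q r : ℝ, 0 < q ∧ q + r * b = 1 ∧ q * b * ωx = r * ωy := by
  have hs : 0 < ωy + b ^ 2 * ωx := by positivity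
  refine ⟨ωy / (ωy + b ^ 2 * ωx), b * ωx / (ωy + b ^ 2 * ωx), by positivity, ?_, ?_⟩ <;>
    field_simp

lemma exists_pos_forall_eq {Ω : E → Matrix (Fin p) (Fin p) ℝ} (hΩ : ∀ e, DiagPos (Ω e))
    {j : Fin p} (hj : ∀ e f, Ω e j j = Ω f j j) : ∃ ω, 0 < ω ∧ ∀ e, Ω e j j = ω := by
  rcases isEmpty_or_nonempty E with hE | ⟨⟨e₀⟩⟩
  · exact ⟨1, one_pos, isEmptyElim⟩
  · exact ⟨Ω e₀ j j, (hΩ e₀).2 j, fun e => hj e e₀⟩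

lemma diagPos_diagonal {d : Fin p → ℝ} (hd : ∀ i, 0 < d i) : DiagPos (diagonal d) :=
  ⟨isDiag_diagonal d, fun i => by simpa using hd i⟩

theorem IsCoveredEdge.exists_reversal {G : Fin p → Fin p → Prop} {x y : Fin p} {I : Set (Fin p)}
    {B : Matrix (Fin p) (Fin p) ℝ} {Ω : E → Matrix (Fin p) (Fin p) ℝ}
    (hxy : IsCoveredEdge G x y) (hG : IsAcyclic G) (hB : Compatible B G)
    (hΩ : ∀ e, DiagPos (Ω e)) (hI : ∀ j ∉ I, ∀ e f, Ω e j j = Ω f j j) (hx : x ∉ I)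
    (hy : y ∉ I) :
    ∃ (B' : Matrix (Fin p) (Fin p) ℝ) (Ω' : E → Matrix (Fin p) (Fin p) ℝ),
      Compatible B' (reverseEdge G x y) ∧ (∀ e, DiagPos (Ω' e)) ∧
      (∀ j ∉ I, ∀ e f, Ω' e j j = Ω' f j j) ∧ ∀ e, CovOf B (Ω e) = CovOf B' (Ω' e) := by
  obtain ⟨ωx, hωx, hΩx⟩ := exists_pos_forall_eq hΩ (hI x hx)
  obtain ⟨ωy, hωy, hΩy⟩ := exists_pos_forall_eq hΩ (hI y hy)
  set b := B y x
  obtain ⟨q, r, hq, hqr, hqb⟩ := exists_reversal_coeffs b hωx hωy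
  set T := reversalMatrix x y b q r
  have hcomp := hxy.compatible_one_sub_reversalMatrix_mul hG hB hqr
  have hT : T.det = 1 := det_eq_one_of_isDagMatrix_one_sub_mul_one_sub (hB.isDagMatrix hG)
    (hcomp.isDagMatrix (hxy.isAcyclic_reverseEdge hG))
  have hΩ' : ∀ e, T * Ω e * Tᵀ = diagonal (Function.update
      (Function.update (Ω e).diag x (q ^ 2 * ωx + r ^ 2 * ωy)) y (b ^ 2 * ωx + ωy)) := by
    intro e
    conv_lhs => rw [← (hΩ e).1.diagonal_diag]
    rw [reversalMatrix_mul_diagonal_mul_transpose (hxy.ne hG) _ (by simpa [hΩx, hΩy] using hqb)]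
    simp [hΩx, hΩy]
  refine ⟨1 - T * (1 - B), fun e => T * Ω e * Tᵀ, hcomp, fun e => ?_, fun j hj e f => ?_,
    fun e => (covOf_one_sub_mul_one_sub (by simp [hT]) B (Ω e)).symm⟩
  · dsimp only
    rw [hΩ' e]
    refine diagPos_diagonal fun i => ?_
    simp only [Function.update_apply]
    split_ifs
    · positivity
    · positivity
    · exact (hΩ e).2 i
  · simp only [hΩ', diagonal_apply_eq, Function.update_apply, diag_apply]
    split_ifs
    · rfl
    · rfl
    · exact hI j hj e f

theorem exists_compatible_of_iEquiv {I : Set (Fin p)} {D : Fin p → Fin p → Prop}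
    (hD : IsAcyclic D) {G : Fin p → Fin p → Prop} {B : Matrix (Fin p) (Fin p) ℝ}
    {Ω : E → Matrix (Fin p) (Fin p) ℝ} (hG : IsAcyclic G) (hB : Compatible B G)
    (hΩ : ∀ e, DiagPos (Ω e)) (hI : ∀ j ∉ I, ∀ e f, Ω e j j = Ω f j j) (hGD : IEquiv I G D) :
    ∃ (Bt : Matrix (Fin p) (Fin p) ℝ) (Ωt : E → Matrix (Fin p) (Fin p) ℝ),
      Compatible Bt D ∧ (∀ e, DiagPos (Ωt e)) ∧ ∀ e, CovOf B (Ω e) = CovOf Bt (Ωt e) := by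
  induction hn : (disagreements G D).card using Nat.strong_induction_on generalizing G B Ω with
  | _ n ih =>
  by_cases hdis : ∃ a b, G a b ∧ D b a
  · obtain ⟨a, b, hab, hba⟩ := hdis
    obtain ⟨x, y, hxy, hyx⟩ := exists_isCoveredEdge_of_disagree hG hD hGD.1 hGD.2.1 hab hba
    obtain ⟨hx, hy⟩ := hGD.notMem_of_disagree hG hD hxy.1 hyx
    obtain ⟨B', Ω', hB', hΩ', hI', hcov⟩ := hxy.exists_reversal hG hB hΩ hI hx hy
    obtain ⟨Bt, Ωt, hBt, hΩt, hcovt⟩ :=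
      ih _ (hn ▸ card_disagreements_reverseEdge_lt hD hxy.1 hyx) (hxy.isAcyclic_reverseEdge hG)
        hB' hΩ' hI' (hxy.iEquiv_reverseEdge hGD hx hy) rfl
    exact ⟨Bt, Ωt, hBt, hΩt, fun e => (hcov e).trans (hcovt e)⟩
  · refine ⟨B, Ω, fun i j hij => ?_, hΩ, fun e => rfl⟩
    exact ((hGD.1 j i).mp (.inl (hB i j hij))).resolve_right fun h => hdis ⟨j, i, hB i j hij, h⟩

end Model

theorem iequiv_graph_is_distribution_equivalent_general
    {p : ℕ} {E : Type*}
    (B : Matrix (Fin p) (Fin p) ℝ) (Ω : E → Matrix (Fin p) (Fin p) ℝ)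
    (hB : IsDagMatrix B) (hΩ : ∀ e, DiagPos (Ω e))
    (D : Fin p → Fin p → Prop) (hD : IsAcyclic D)
    (hequiv : IEquiv {j : Fin p | ∃ e f : E, Ω e j j ≠ Ω f j j} (graphOf B) D) :
    ∃ Bt : Matrix (Fin p) (Fin p) ℝ, ∃ Ωt : E → Matrix (Fin p) (Fin p) ℝ,
      IsDagMatrix Bt ∧ Compatible Bt D ∧ (∀ e, DiagPos (Ωt e)) ∧
      ∀ e, CovOf B (Ω e) = CovOf Bt (Ωt e) := by
  obtain ⟨Bt, Ωt, hBt, hΩt, hcov⟩ := exists_compatible_of_iEquiv hD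
    (isDagMatrix_iff_isAcyclic_graphOf.mp hB) (fun _ _ h => h) hΩ
    (fun j hj e f => by_contra fun h => hj (Set.mem_ofPred.mpr ⟨e, f, h⟩))
    hequiv
  exact ⟨Bt, Ωt, hBt.isDagMatrix hD, hBt, hΩt, hcov⟩

/-- Lemma (I-MAPs are distribution equivalent, graphical form): if a DAG `𝒟` is
`𝓘`-equivalent to the graph `G(B)` of a model `(B, {Ω^e}_{e∈ℰ})`, where
`𝓘 = { j : ∃ e f, Ω^e_jj ≠ Ω^f_jj }`, then there is a model `(B~, {Ω~^e}_{e∈ℰ})` with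
`B~` compatible with `𝒟` entailing the same covariances in every environment. -/
theorem iequiv_graph_is_distribution_equivalent
    {p : ℕ} {E : Type*} [Fintype E]
    (B : Matrix (Fin p) (Fin p) ℝ) (Ω : E → Matrix (Fin p) (Fin p) ℝ)
    (hB : IsDagMatrix B) (hΩ : ∀ e, DiagPos (Ω e))
    (D : Fin p → Fin p → Prop) (hD : IsAcyclic D)
    (hequiv : IEquiv {j : Fin p | ∃ e f : E, Ω e j j ≠ Ω f j j} (graphOf B) D) :
    ∃ Bt : Matrix (Fin p) (Fin p) ℝ, ∃ Ωt : E → Matrix (Fin p) (Fin p) ℝ,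
      IsDagMatrix Bt ∧ Compatible Bt D ∧ (∀ e, DiagPos (Ωt e)) ∧
      ∀ e, CovOf B (Ω e) = CovOf Bt (Ωt e) :=
  iequiv_graph_is_distribution_equivalent_general B Ω hB hΩ D hD hequiv
end

section
/- Let 𝒟 be a DAG on [p] and let 𝒴 be a family of subsets of [p] with ∅ ∈ 𝒴. Set 𝓘 := ⋃_{Y∈𝒴} Y. If a DAG 𝒟' is 𝓘-equivalent to 𝒟, then the interventional DAGs 𝒟^𝒴 and 𝒟'^𝒴 have the same skeleton and the same v-structures. -/
open Matrix

/-- The interventional DAG `𝒟^𝒴`: for each nonempty `Y ∈ 𝒴` a new source node `ζ_Y`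
is added, with an edge `ζ_Y → k` for every `k ∈ Y`. -/
def interventionalDAG {p : ℕ} (D : Fin p → Fin p → Prop) (𝒴 : Set (Set (Fin p))) :
    (Fin p ⊕ {Y : Set (Fin p) // Y ∈ 𝒴 ∧ Y.Nonempty}) →
      (Fin p ⊕ {Y : Set (Fin p) // Y ∈ 𝒴 ∧ Y.Nonempty}) → Prop
  | Sum.inl a, Sum.inl b => D a b
  | Sum.inr Y, Sum.inl k => k ∈ Y.val
  | _, _ => False

/-- If `𝒟'` is `𝓘`-equivalent to `𝒟` for `𝓘 = ⋃_{Y ∈ 𝒴} Y` with `∅ ∈ 𝒴`, then the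
interventional DAGs `𝒟^𝒴` and `𝒟'^𝒴` have the same skeleton and v-structures. -/
theorem iequiv_subset_yang_mec
    {p : ℕ} (D D' : Fin p → Fin p → Prop)
    (hD : IsAcyclic D) (hD' : IsAcyclic D')
    (𝒴 : Set (Set (Fin p))) (hempty : ∅ ∈ 𝒴)
    (hequiv : IEquiv (⋃ Y ∈ 𝒴, Y) D D') :
    SameSkeleton (interventionalDAG D 𝒴) (interventionalDAG D' 𝒴) ∧
      SameVStructs (interventionalDAG D 𝒴) (interventionalDAG D' 𝒴) := by
  obtain ⟨hsk, hvs, hpar⟩ := hequiv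
  have hpar' : ∀ (Y : {Y : Set (Fin p) // Y ∈ 𝒴 ∧ Y.Nonempty}) (k : Fin p),
      k ∈ Y.val → ∀ j, (D j k ↔ D' j k) := by
    intro Y k hk j
    exact hpar k (Set.mem_biUnion Y.2.1 hk) j
  constructor
  · rintro (a | a) (b | b) <;> simp only [interventionalDAG] <;>
      first | exact hsk a b | tauto
  · rintro (i | i) (k | k) (j | j) <;>
      simp only [IsVStruct, interventionalDAG] <;>
      try tauto
    · -- all inl
      have h1 := hvs i k j
      simp only [IsVStruct] at h1
      constructor
      · rintro ⟨h1', h2, h3, h4, h5⟩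
        have := h1.mp ⟨h1', h2, by simpa using h3, h4, h5⟩
        exact ⟨this.1, this.2.1, by simpa using this.2.2.1, this.2.2.2.1, this.2.2.2.2⟩
      · rintro ⟨h1', h2, h3, h4, h5⟩
        have := h1.mpr ⟨h1', h2, by simpa using h3, h4, h5⟩
        exact ⟨this.1, this.2.1, by simpa using this.2.2.1, this.2.2.2.1, this.2.2.2.2⟩
    · -- i inl, j inr
      constructor
      · rintro ⟨h1, h2, h3, h4, h5⟩
        exact ⟨(hpar' j k h2 i).mp h1, h2, h3, h4, h5⟩
      · rintro ⟨h1, h2, h3, h4, h5⟩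
        exact ⟨(hpar' j k h2 i).mpr h1, h2, h3, h4, h5⟩
    · -- i inr, j inl
      constructor
      · rintro ⟨h1, h2, h3, h4, h5⟩
        exact ⟨h1, (hpar' i k h1 j).mp h2, h3, h4, h5⟩
      · rintro ⟨h1, h2, h3, h4, h5⟩
        exact ⟨h1, (hpar' i k h1 j).mpr h2, h3, h4, h5⟩
end

section
/- Let M ∈ ℝ^{p×p} be a full-rank matrix with pairwise orthogonal row vectors such that every row of M has more than one non-zero entry. Let D ∈ ℝ^{p×p} be a diagonal matrix with positive diagonal entries for which there exists i ∈ [p] such that D_{ii} ≠ D_{jj} for all j ≠ i. Then the row vectors of M D are not pairwise orthogonal, i.e., there exist k ≠ l with ⟨(MD)_{k:}, (MD)_{l:}⟩ ≠ 0. -/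
open Matrix

/-- Scaling of a matrix with orthogonal rows: if `M` is full rank with pairwise
orthogonal rows, each containing more than one non-zero entry, and `D` is diagonal with
positive entries such that some `D_ii` differs from all other `D_jj`, then the rows of
`M D` are not pairwise orthogonal. -/
theorem scaled_orthogonal_rows_not_orthogonal
    {p : ℕ} (M D : Matrix (Fin p) (Fin p) ℝ)
    (hM : IsUnit M)
    (horth : ∀ k l : Fin p, k ≠ l → M k ⬝ᵥ M l = 0)
    (hrows : ∀ k : Fin p, ∃ j l : Fin p, j ≠ l ∧ M k j ≠ 0 ∧ M k l ≠ 0)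
    (hdiag : D.IsDiag) (hpos : ∀ i, 0 < D i i)
    (hi : ∃ i : Fin p, ∀ j : Fin p, j ≠ i → D i i ≠ D j j) :
    ∃ k l : Fin p, k ≠ l ∧ (M * D) k ⬝ᵥ (M * D) l ≠ 0 := by
  by_contra hcon
  push_neg at hcon
  obtain ⟨i, hi⟩ := hi
  set d : Fin p → ℝ := fun j => D j j with hd
  have hD : D = diagonal d := hdiag.diagonal_diag.symm
  have hdet : IsUnit M.det := (Matrix.isUnit_iff_isUnit_det M).mp hM
  have hMN : M * M⁻¹ = 1 := Matrix.mul_nonsing_inv M hdet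
  have hNM : M⁻¹ * M = 1 := Matrix.nonsing_inv_mul M hdet
  -- rows of M are nonzero
  have hrownz : ∀ k : Fin p, M k ⬝ᵥ M k ≠ 0 := by
    intro k hzero
    have hMk : M k = 0 := (dotProduct_self_eq_zero (v := M k)).mp hzero
    have h1 : (M * M⁻¹) k k = 1 := by rw [hMN]; simp
    rw [Matrix.mul_apply] at h1
    simp [hMk] at h1
  set c : Fin p → ℝ := fun k => ((M * D) k ⬝ᵥ (M * D) k) / (M k ⬝ᵥ M k) with hc
  have hmain : M * (D * D * Mᵀ) = M * (Mᵀ * diagonal c) := by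
    ext k l
    have hL : (M * (D * D * Mᵀ)) k l = (M * D) k ⬝ᵥ (M * D) l := by
      rw [hD, Matrix.diagonal_mul_diagonal, Matrix.mul_apply]
      simp only [dotProduct]
      apply Finset.sum_congr rfl
      intro j _
      rw [Matrix.diagonal_mul, Matrix.transpose_apply, Matrix.mul_diagonal, Matrix.mul_diagonal]
      ring
    have hR : (M * (Mᵀ * diagonal c)) k l = (M k ⬝ᵥ M l) * c l := by
      rw [Matrix.mul_apply]
      simp only [dotProduct]
      rw [Finset.sum_mul]
      apply Finset.sum_congr rfl
      intro j _
      rw [Matrix.mul_diagonal, Matrix.transpose_apply]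
      ring
    rw [hL, hR]
    rcases eq_or_ne k l with rfl | hne
    · rw [hc, mul_comm, div_mul_cancel₀ _ (hrownz k)]
    · rw [hcon k l hne, horth k l hne, zero_mul]
  have key : D * D * Mᵀ = Mᵀ * diagonal c := hM.mul_left_cancel hmain
  have keyE : ∀ k j : Fin p, d j * d j * M k j = M k j * c k := by
    intro k j
    have h := congrFun (congrFun key j) k
    rw [hD] at h
    simpa only [Matrix.diagonal_mul_diagonal, Matrix.diagonal_mul, Matrix.mul_diagonal,
      Matrix.transpose_apply, mul_assoc] using h
  -- column i of M is nonzero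
  have hcol : ∃ k : Fin p, M k i ≠ 0 := by
    by_contra hcol
    push_neg at hcol
    have h1 : (M⁻¹ * M) i i = 1 := by rw [hNM]; simp
    rw [Matrix.mul_apply] at h1
    simp [hcol] at h1
  obtain ⟨k, hk⟩ := hcol
  obtain ⟨a, b, hab, ha, hb⟩ := hrows k
  -- pick m ≠ i with M k m ≠ 0
  obtain ⟨m, hmi, hm⟩ : ∃ m : Fin p, m ≠ i ∧ M k m ≠ 0 := by
    rcases eq_or_ne a i with rfl | hai
    · exact ⟨b, fun h => hab h.symm, hb⟩
    · exact ⟨a, hai, ha⟩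
  have h1 : d i * d i = c k := by
    have h := keyE k i
    rw [mul_comm (M k i)] at h
    exact mul_right_cancel₀ hk h
  have h2 : d m * d m = c k := by
    have h := keyE k m
    rw [mul_comm (M k m)] at h
    exact mul_right_cancel₀ hm h
  have hdm : d i = d m := by
    have hsq : d i * d i = d m * d m := by rw [h1, h2]
    rcases mul_self_eq_mul_self_iff.mp hsq with h | h
    · exact h
    · have hpi := hpos i; have hpm := hpos m
      simp only [hd] at h ⊢; linarith
  exact hi m hmi hdm
end

section
/- Let (B, Ω) and (B', Ω') be distribution equivalent models, i.e., B and B' are DAG matrices, Ω and Ω' are diagonal with positive diagonal entries, and (I−B)⁻¹ Ω (I−B)⁻ᵀ = (I−B')⁻¹ Ω' (I−B')⁻ᵀ. Then for every i ∈ [p] the following three statements are equivalent: (i) B_{i:} = B'_{i:}; (ii) the i-th row of (I−B')(I−B)⁻¹ equals e_iᵀ; (iii) the i-th column of (I−B')(I−B)⁻¹ equals e_i. -/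
open Matrix

lemma isUnit_det_one_sub {p : ℕ} {B : Matrix (Fin p) (Fin p) ℝ} (hB : IsDagMatrix B) :
    IsUnit (1 - B).det := by
  obtain ⟨σ, hσ⟩ := hB
  have hdet : (1 - B).det = ((1 - B).submatrix σ.symm σ.symm).det :=
    (Matrix.det_submatrix_equiv_self σ.symm _).symm
  have htri : ((1 - B).submatrix σ.symm σ.symm).BlockTriangular OrderDual.toDual := by
    intro a b hab
    have hab' : (a : Fin p) < b := hab
    have h1 : B (σ.symm a) (σ.symm b) = 0 := hσ _ _ (by simp [le_of_lt hab'])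
    simp [Matrix.sub_apply, Matrix.one_apply, h1,
      (Equiv.injective σ.symm).ne (ne_of_lt hab')]
  rw [hdet, Matrix.det_of_lowerTriangular _ htri]
  have hprod : ∀ a : Fin p, (1 - B).submatrix σ.symm σ.symm a a = 1 := by
    intro a
    have h1 : B (σ.symm a) (σ.symm a) = 0 := hσ _ _ le_rfl
    simp [Matrix.sub_apply, h1]
  rw [Finset.prod_eq_one fun a _ => hprod a]
  exact isUnit_one

lemma sum_single_mul {p : ℕ} (i : Fin p) (f : Fin p → ℝ) :
    ∑ k, (Pi.single i 1 : Fin p → ℝ) k * f k = f i := by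
  rw [Finset.sum_eq_single i]
  · simp
  · intro b _ hb; simp [Pi.single_apply, hb]
  · simp

lemma sum_mul_single {p : ℕ} (i : Fin p) (f : Fin p → ℝ) :
    ∑ k, f k * (Pi.single i 1 : Fin p → ℝ) k = f i := by
  rw [Finset.sum_eq_single i]
  · simp
  · intro b _ hb; simp [Pi.single_apply, hb]
  · simp

lemma sum_mul_diag {p : ℕ} {Ω : Matrix (Fin p) (Fin p) ℝ} (hΩ : Ω.IsDiag)
    (i : Fin p) (f : Fin p → ℝ) : ∑ l, f l * Ω l i = f i * Ω i i := by
  rw [Finset.sum_eq_single i]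
  · intro b _ hb; rw [hΩ hb, mul_zero]
  · simp

lemma sum_diag_mul {p : ℕ} {Ω : Matrix (Fin p) (Fin p) ℝ} (hΩ : Ω.IsDiag)
    (j : Fin p) (f : Fin p → ℝ) : ∑ l, Ω j l * f l = Ω j j * f j := by
  rw [Finset.sum_eq_single j]
  · intro b _ hb; rw [hΩ (Ne.symm hb), zero_mul]
  · simp

lemma key {p : ℕ} {M Ω Ω' : Matrix (Fin p) (Fin p) ℝ} (hΩ : Ω.IsDiag)
    (hΩ' : Ω'.IsDiag) (i : Fin p) (hpos : Ω i i ≠ 0)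
    (hCov : M * Ω * Mᵀ = Ω') (hrow : M i = Pi.single i 1) :
    (fun k => M k i) = Pi.single i 1 := by
  funext k
  by_cases hk : k = i
  · subst hk
    simpa using congrFun hrow k
  · have h0 : Ω' k i = 0 := hΩ' hk
    have h1 : (M * Ω * Mᵀ) k i = M k i * Ω i i := by
      rw [Matrix.mul_apply]
      have hc : ∀ j, (M * Ω) k j * Mᵀ j i = (M * Ω) k j * (Pi.single i 1 : Fin p → ℝ) j := by
        intro j; rw [Matrix.transpose_apply, ← hrow]
      rw [Finset.sum_congr rfl fun j _ => hc j, sum_mul_single, Matrix.mul_apply,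
        sum_mul_diag hΩ]
    rw [hCov, h0] at h1
    have hz : M k i = 0 := by
      rcases mul_eq_zero.mp h1.symm with h | h
      · exact h
      · exact absurd h hpos
    rw [hz, Pi.single_apply, if_neg hk]

/-- Structure of `(I − B')(I − B)⁻¹` for distribution equivalent models: for every `i`,
the following are equivalent: (i) `B_{i:} = B'_{i:}`; (ii) the `i`-th row of
`(I − B')(I − B)⁻¹` equals `e_iᵀ`; (iii) the `i`-th column of `(I − B')(I − B)⁻¹`
equals `e_i`. -/
theorem row_eq_iff_unit_row_iff_unit_col
    {p : ℕ} (B B' Ω Ω' : Matrix (Fin p) (Fin p) ℝ)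
    (hB : IsDagMatrix B) (hB' : IsDagMatrix B')
    (hΩ : DiagPos Ω) (hΩ' : DiagPos Ω')
    (heq : CovOf B Ω = CovOf B' Ω') (i : Fin p) :
    (B i = B' i ↔ ((1 - B') * (1 - B)⁻¹) i = Pi.single i 1) ∧
    (((1 - B') * (1 - B)⁻¹) i = Pi.single i 1 ↔
      (fun k => ((1 - B') * (1 - B)⁻¹) k i) = Pi.single i 1) := by
  obtain ⟨hΩd, hΩpos⟩ := hΩ
  obtain ⟨hΩ'd, hΩ'pos⟩ := hΩ'
  have hA : IsUnit (1 - B).det := isUnit_det_one_sub hB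
  have hA' : IsUnit (1 - B').det := isUnit_det_one_sub hB'
  have hAinv : (1 - B) * (1 - B)⁻¹ = 1 := Matrix.mul_nonsing_inv _ hA
  have hinvA : (1 - B)⁻¹ * (1 - B) = 1 := Matrix.nonsing_inv_mul _ hA
  have hA'inv : (1 - B') * (1 - B')⁻¹ = 1 := Matrix.mul_nonsing_inv _ hA'
  set C := (1 - B') * (1 - B)⁻¹ with hCdef
  have hCov : C * Ω * Cᵀ = Ω' := by
    have h1 : C * Ω * Cᵀ = (1 - B') * CovOf B Ω * (1 - B')ᵀ := by
      simp only [hCdef, CovOf, Matrix.transpose_mul, Matrix.mul_assoc]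
    have h2 : ((1 - B')⁻¹)ᵀ * (1 - B')ᵀ = 1 := by
      rw [← Matrix.transpose_mul, hA'inv, Matrix.transpose_one]
    rw [h1, heq]
    calc (1 - B') * CovOf B' Ω' * (1 - B')ᵀ
        = ((1 - B') * (1 - B')⁻¹) * Ω' * (((1 - B')⁻¹)ᵀ * (1 - B')ᵀ) := by
          simp only [CovOf, Matrix.mul_assoc]
      _ = Ω' := by rw [hA'inv, h2, Matrix.one_mul, Matrix.mul_one]
  refine ⟨⟨?_, ?_⟩, ?_, ?_⟩
  · -- (i) → (ii)
    intro h
    funext j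
    have hrow : ∀ k, (1 - B') i k = (1 - B) i k := by
      intro k; simp [Matrix.sub_apply, congrFun h k]
    calc C i j = ∑ k, (1 - B) i k * (1 - B)⁻¹ k j := by
          rw [hCdef, Matrix.mul_apply]
          exact Finset.sum_congr rfl fun k _ => by rw [hrow k]
      _ = ((1 - B) * (1 - B)⁻¹) i j := (Matrix.mul_apply).symm
      _ = (1 : Matrix (Fin p) (Fin p) ℝ) i j := by rw [hAinv]
      _ = (Pi.single i 1 : Fin p → ℝ) j := by
          rw [Matrix.one_apply, Pi.single_apply]
          simp [eq_comm]
  · -- (ii) → (i)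
    intro h
    funext j
    have h1 : (1 - B') i j = (C * (1 - B)) i j := by
      rw [hCdef, Matrix.mul_assoc, hinvA, Matrix.mul_one]
    have h2 : (C * (1 - B)) i j = (1 - B) i j := by
      rw [Matrix.mul_apply]
      calc ∑ k, C i k * (1 - B) k j
          = ∑ k, (Pi.single i 1 : Fin p → ℝ) k * (1 - B) k j :=
            Finset.sum_congr rfl fun k _ => by rw [congrFun h k]
        _ = (1 - B) i j := sum_single_mul i _
    have h3 : (1 : Matrix (Fin p) (Fin p) ℝ) i j - B' i j
        = (1 : Matrix (Fin p) (Fin p) ℝ) i j - B i j := by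
      simpa [Matrix.sub_apply] using h1.trans h2
    linarith
  · -- (ii) → (iii)
    intro h
    exact key hΩd hΩ'd i (ne_of_gt (hΩpos i)) hCov h
  · -- (iii) → (ii)
    intro h
    have hdetC : IsUnit C.det := by
      rw [hCdef, Matrix.det_mul]
      exact hA'.mul (Matrix.isUnit_nonsing_inv_det _ hA)
    have hCC : C⁻¹ * C = 1 := Matrix.nonsing_inv_mul _ hdetC
    have hM : Ω * Cᵀ = C⁻¹ * Ω' := by
      rw [← hCov]
      calc Ω * Cᵀ = (C⁻¹ * C) * Ω * Cᵀ := by rw [hCC, Matrix.one_mul]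
        _ = C⁻¹ * (C * Ω * Cᵀ) := by simp only [Matrix.mul_assoc]
    have hCinv_col : ∀ j, C⁻¹ j i = if j = i then (1:ℝ) else 0 := by
      intro j
      have h1 : (C⁻¹ * C) j i = C⁻¹ j i := by
        rw [Matrix.mul_apply]
        calc ∑ l, C⁻¹ j l * C l i
            = ∑ l, C⁻¹ j l * (Pi.single i 1 : Fin p → ℝ) l :=
              Finset.sum_congr rfl fun l _ => by rw [show C l i = (Pi.single i 1 : Fin p → ℝ) l from congrFun h l]
          _ = C⁻¹ j i := sum_mul_single i _
      rw [← h1, hCC, Matrix.one_apply]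
    funext j
    by_cases hj : j = i
    · subst hj
      simpa using congrFun h j
    · have h2 : (Ω * Cᵀ) j i = (C⁻¹ * Ω') j i := by rw [hM]
      have hL : (Ω * Cᵀ) j i = Ω j j * C i j := by
        rw [Matrix.mul_apply]
        calc ∑ l, Ω j l * Cᵀ l i = ∑ l, Ω j l * C i l := by
              simp [Matrix.transpose_apply]
          _ = Ω j j * C i j := sum_diag_mul hΩd j _
      have hR : (C⁻¹ * Ω') j i = 0 := by
        rw [Matrix.mul_apply, sum_mul_diag hΩ'd, hCinv_col, if_neg hj, zero_mul]
      rw [hL, hR] at h2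
      have hz : C i j = 0 := by
        rcases mul_eq_zero.mp h2 with hc | hc
        · exact absurd hc (ne_of_gt (hΩpos j))
        · exact hc
      rw [hz, Pi.single_apply, if_neg hj]
end

section
/- Let (B, Ω) and (B', Ω') be distribution equivalent models, i.e., B and B' are DAG matrices, Ω and Ω' are diagonal with positive diagonal entries, and (I−B)⁻¹ Ω (I−B)⁻ᵀ = (I−B')⁻¹ Ω' (I−B')⁻ᵀ. Then for every i ∈ [p], the supports of the i-th rows coincide, supp(B_{i:}) = supp(B'_{i:}), if and only if B_{i:} = B'_{i:}. -/
open Matrix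

lemma dag_det_one {p : ℕ} {B : Matrix (Fin p) (Fin p) ℝ} (hB : IsDagMatrix B) :
    (1 - B).det = 1 := by
  obtain ⟨σ, hσ⟩ := hB
  rw [← Matrix.det_submatrix_equiv_self σ.symm (1 - B)]
  rw [Matrix.det_of_lowerTriangular]
  · apply Finset.prod_eq_one
    intro a _
    simp [Matrix.submatrix_apply, Matrix.sub_apply, hσ (σ.symm a) (σ.symm a) le_rfl]
  · intro a b hab
    replace hab : (a : Fin p) < b := hab
    simp [Matrix.submatrix_apply, Matrix.sub_apply,
      Matrix.one_apply_ne (σ.symm.injective.ne hab.ne),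
      hσ (σ.symm a) (σ.symm b) (by simp [hab.le])]

/-- `((1-B) * CovOf B Ω) i j = 0` whenever `B i j ≠ 0` (i.e. `j` is a parent of `i`). -/
lemma key_entry {p : ℕ} {B Ω : Matrix (Fin p) (Fin p) ℝ}
    (hB : IsDagMatrix B) (hΩ : Ω.IsDiag) {i j : Fin p} (hij : B i j ≠ 0) :
    ((1 - B) * CovOf B Ω) i j = 0 := by
  obtain ⟨σ, hσ⟩ := hB
  have hdet : (1 - B).det = 1 := dag_det_one ⟨σ, hσ⟩
  have hunit : IsUnit (1 - B).det := by rw [hdet]; exact isUnit_one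
  have hAcov : (1 - B) * CovOf B Ω = Ω * ((1 - B)⁻¹)ᵀ := by
    rw [CovOf, ← Matrix.mul_assoc, ← Matrix.mul_assoc, Matrix.mul_nonsing_inv _ hunit,
      Matrix.one_mul]
  have hσji : σ j < σ i := lt_of_not_ge fun h => hij (hσ i j h)
  -- triangularity of the inverse
  haveI : Invertible (1 - B) := (1 - B).invertibleOfIsUnitDet hunit
  have htri : (1 - B).BlockTriangular (fun k => OrderDual.toDual (σ k)) := by
    intro a b hab
    replace hab : σ a < σ b := hab
    simp [Matrix.sub_apply, Matrix.one_apply_ne (fun h : a = b => absurd (h ▸ hab) (lt_irrefl _)),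
      hσ a b hab.le]
  have hinvtri := Matrix.blockTriangular_inv_of_blockTriangular htri
  have hNji : (1 - B)⁻¹ j i = 0 := hinvtri (show OrderDual.toDual (σ i) < OrderDual.toDual (σ j) from hσji)
  rw [hAcov]
  rw [Matrix.mul_apply]
  apply Finset.sum_eq_zero
  intro k _
  rcases eq_or_ne i k with rfl | hk
  · simp [Matrix.transpose_apply, hNji]
  · simp [hΩ hk]

/-- Same structure implies same coefficients: for distribution equivalent models
`(B, Ω)` and `(B', Ω')`, the supports of the `i`-th rows coincide if and only if the
rows themselves coincide. -/
theorem same_support_iff_same_row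
    {p : ℕ} (B B' Ω Ω' : Matrix (Fin p) (Fin p) ℝ)
    (hB : IsDagMatrix B) (hB' : IsDagMatrix B')
    (hΩ : DiagPos Ω) (hΩ' : DiagPos Ω')
    (heq : CovOf B Ω = CovOf B' Ω') (i : Fin p) :
    {j : Fin p | B i j ≠ 0} = {j : Fin p | B' i j ≠ 0} ↔ B i = B' i := by
  constructor
  · intro hsupp
    have hsupp' : ∀ j, B i j ≠ 0 ↔ B' i j ≠ 0 := fun j => Set.ext_iff.mp hsupp j
    set Sg := CovOf B Ω with hSg
    -- key vanishing facts
    have hK : ∀ j, B i j ≠ 0 → ((1 - B) * Sg) i j = 0 := fun j hj => key_entry hB hΩ.1 hj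
    have hK' : ∀ j, B' i j ≠ 0 → ((1 - B') * Sg) i j = 0 := by
      intro j hj
      have h2 := key_entry hB' hΩ'.1 hj
      rwa [← heq] at h2
    set d : Fin p → ℝ := fun j => B' i j - B i j with hd
    have hd0 : ∀ j, d j ≠ 0 → B i j ≠ 0 ∧ B' i j ≠ 0 := by
      intro j hj
      by_cases h1 : B i j = 0
      · have h2 : B' i j = 0 := by
          by_contra h2
          exact ((hsupp' j).mpr h2) h1
        exact absurd (by simp [hd, h1, h2]) hj
      · exact ⟨h1, (hsupp' j).mp h1⟩
    -- the quadratic form of d vanishes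
    have hrow : ∀ j, Matrix.vecMul d Sg j = (((1 - B) - (1 - B')) * Sg) i j := by
      intro j
      rw [Matrix.mul_apply, Matrix.vecMul, dotProduct]
      apply Finset.sum_congr rfl
      intro k _
      simp [hd, Matrix.sub_apply]
    have hq : Matrix.vecMul d Sg ⬝ᵥ d = 0 := by
      rw [dotProduct]
      apply Finset.sum_eq_zero
      intro j _
      rcases eq_or_ne (d j) 0 with hj | hj
      · rw [hj, mul_zero]
      · obtain ⟨h1, h2⟩ := hd0 j hj
        rw [hrow j, Matrix.sub_mul, Matrix.sub_apply, hK j h1, hK' j h2, sub_zero, zero_mul]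
    -- positivity: write the quadratic form via w = d N
    have hdet : (1 - B).det = 1 := dag_det_one hB
    have hunit : IsUnit (1 - B).det := by rw [hdet]; exact isUnit_one
    set N := (1 - B)⁻¹ with hN
    set w : Fin p → ℝ := Matrix.vecMul d N with hw
    have hsplit : Matrix.vecMul d Sg ⬝ᵥ d = Matrix.vecMul w Ω ⬝ᵥ w := by
      rw [hSg, CovOf, ← hN, ← Matrix.vecMul_vecMul, ← Matrix.vecMul_vecMul, ← hw,
        ← Matrix.dotProduct_mulVec, Matrix.mulVec_transpose, ← hw]
    have hterm : ∀ k, Matrix.vecMul w Ω k = Ω k k * w k := by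
      intro k
      rw [Matrix.vecMul, dotProduct]
      rw [Finset.sum_eq_single k]
      · ring
      · intro b _ hb; rw [hΩ.1 hb]; ring
      · intro hk; exact absurd (Finset.mem_univ k) hk
    have hw0 : w = 0 := by
      have hsum : ∑ k, Ω k k * (w k * w k) = 0 := by
        rw [← hq, hsplit, dotProduct]
        apply Finset.sum_congr rfl
        intro k _
        rw [hterm k]; ring
      have hz := (Finset.sum_eq_zero_iff_of_nonneg (fun k _ =>
        mul_nonneg (hΩ.2 k).le (mul_self_nonneg (w k)))).mp hsum
      funext k
      have := hz k (Finset.mem_univ k)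
      have hk : w k * w k = 0 := by
        rcases mul_eq_zero.mp this with h | h
        · exact absurd h (hΩ.2 k).ne'
        · exact h
      simpa using mul_self_eq_zero.mp hk
    have hdd : d = 0 := by
      have : Matrix.vecMul d (N * (1 - B)) = Matrix.vecMul w (1 - B) := by
        rw [← Matrix.vecMul_vecMul, ← hw]
      rw [hN, Matrix.nonsing_inv_mul _ hunit, Matrix.vecMul_one, hw0, Matrix.zero_vecMul] at this
      exact this
    funext j
    have := congrFun hdd j
    simp only [hd, Pi.zero_apply] at this
    linarith
  · intro h
    rw [h]
end

section
/- Let (B, {Ω^e}_{e∈ℰ}) and (B~, {Ω~^e}_{e∈ℰ}) be distribution equivalent models over a finite collection of environments ℰ, and let 𝓘 := { j : ∃ e, f ∈ ℰ with Ω^e_{jj} ≠ Ω^f_{jj} }. Assume (intervention-heterogeneity) that for every pair e, f ∈ ℰ and every i ≠ j such that Ω^e_{ii} ≠ Ω^f_{ii} and Ω^e_{jj} ≠ Ω^f_{jj}, one has Ω^e_{ii}/Ω^f_{ii} ≠ Ω^e_{jj}/Ω^f_{jj}. Assume additionally that all diagonal entries of (I−B~)(I−B)⁻¹ are non-zero.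 Then B~_{i:} = B_{i:} for every i ∈ 𝓘. -/
open Matrix

lemma dag_diag_zero {p : ℕ} {B : Matrix (Fin p) (Fin p) ℝ} (hB : IsDagMatrix B) (i : Fin p) :
    B i i = 0 := by
  obtain ⟨σ, hσ⟩ := hB
  exact hσ i i le_rfl

lemma diag_mul_entry {p : ℕ} {D N : Matrix (Fin p) (Fin p) ℝ} (hD : D.IsDiag) (i k : Fin p) :
    (D * N) i k = D i i * N i k := by
  conv_lhs => rw [← hD.diagonal_diag]
  rw [Matrix.diagonal_mul]
  rfl

lemma mul_diag_entry {p : ℕ} {D N : Matrix (Fin p) (Fin p) ℝ} (hD : D.IsDiag) (i k : Fin p) :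
    (N * D) i k = N i k * D k k := by
  conv_lhs => rw [← hD.diagonal_diag]
  rw [Matrix.mul_diagonal]
  rfl

/-- Targets have the same parents: for distribution equivalent models satisfying
intervention-heterogeneity and with all diagonal entries of `(I − B~)(I − B)⁻¹`
non-zero, the rows of `B~` and `B` indexed by intervention targets coincide. -/
theorem targets_have_same_rows
    {p : ℕ} {E : Type*} [Fintype E]
    (B Bt : Matrix (Fin p) (Fin p) ℝ)
    (Ω Ωt : E → Matrix (Fin p) (Fin p) ℝ)
    (hB : IsDagMatrix B) (hBt : IsDagMatrix Bt)
    (hΩ : ∀ e, DiagPos (Ω e)) (hΩt : ∀ e, DiagPos (Ωt e))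
    (heq : ∀ e, CovOf B (Ω e) = CovOf Bt (Ωt e))
    (hhet : ∀ e f : E, ∀ i j : Fin p, i ≠ j →
      Ω e i i ≠ Ω f i i → Ω e j j ≠ Ω f j j →
      Ω e i i / Ω f i i ≠ Ω e j j / Ω f j j)
    (hdiagM : ∀ i : Fin p, ((1 - Bt) * (1 - B)⁻¹) i i ≠ 0) :
    ∀ i ∈ {j : Fin p | ∃ e f : E, Ω e j j ≠ Ω f j j}, Bt i = B i := by
  intro i hi
  obtain ⟨e, f, hef⟩ := hi
  have hdB : IsUnit (1 - B).det := by rw [dag_det_one hB]; exact isUnit_one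
  have hdBt : IsUnit (1 - Bt).det := by rw [dag_det_one hBt]; exact isUnit_one
  set M := (1 - Bt) * (1 - B)⁻¹ with hMdef
  have hMii : M i i ≠ 0 := hdiagM i
  have hdM : IsUnit M.det := by
    rw [hMdef, Matrix.det_mul]
    exact hdBt.mul ((1 - B).isUnit_nonsing_inv_det hdB)
  have hdMt : IsUnit Mᵀ.det := by rwa [Matrix.det_transpose]
  have hMB : M * (1 - B) = 1 - Bt := by
    rw [hMdef, Matrix.mul_assoc, Matrix.nonsing_inv_mul _ hdB, Matrix.mul_one]
  -- cancellation helper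
  have cancel : ∀ (A : Matrix (Fin p) (Fin p) ℝ), IsUnit A.det →
      ∀ X : Matrix (Fin p) (Fin p) ℝ, A * (A⁻¹ * X * (A⁻¹)ᵀ) * Aᵀ = X := by
    intro A hA X
    have h1 : A * A⁻¹ = 1 := Matrix.mul_nonsing_inv _ hA
    have h2 : (A⁻¹)ᵀ * Aᵀ = 1 := by rw [← Matrix.transpose_mul, h1, Matrix.transpose_one]
    calc A * (A⁻¹ * X * (A⁻¹)ᵀ) * Aᵀ
        = (A * A⁻¹) * (X * ((A⁻¹)ᵀ * Aᵀ)) := by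
          simp only [Matrix.mul_assoc]
      _ = X := by rw [h1, h2, Matrix.one_mul, Matrix.mul_one]
  have hcov : ∀ g, Ωt g = M * Ω g * Mᵀ := by
    intro g
    have h := heq g
    unfold CovOf at h
    have h' : (1 - Bt) * ((1 - B)⁻¹ * Ω g * ((1 - B)⁻¹)ᵀ) * (1 - Bt)ᵀ = Ωt g := by
      rw [h]; exact cancel _ hdBt _
    rw [← h', hMdef]
    rw [Matrix.transpose_mul]
    simp only [Matrix.mul_assoc]
  -- key identity : Ωt e * M * Ω f = Ωt f * M * Ω e
  have hdiagcomm : Ωt e * Ωt f = Ωt f * Ωt e := by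
    rw [← (hΩt e).1.diagonal_diag, ← (hΩt f).1.diagonal_diag,
      Matrix.diagonal_mul_diagonal, Matrix.diagonal_mul_diagonal]
    exact congrArg Matrix.diagonal (funext fun x => mul_comm _ _)
  have hkeyT : (Ωt e * M * Ω f) * Mᵀ = (Ωt f * M * Ω e) * Mᵀ := by
    calc (Ωt e * M * Ω f) * Mᵀ = Ωt e * (M * Ω f * Mᵀ) := by simp only [Matrix.mul_assoc]
      _ = Ωt e * Ωt f := by rw [← hcov f]
      _ = Ωt f * Ωt e := hdiagcomm
      _ = Ωt f * (M * Ω e * Mᵀ) := by rw [← hcov e]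
      _ = (Ωt f * M * Ω e) * Mᵀ := by simp only [Matrix.mul_assoc]
  have hkey : Ωt e * M * Ω f = Ωt f * M * Ω e := by
    have h1 : (Ωt e * M * Ω f) * Mᵀ * (Mᵀ)⁻¹ = (Ωt f * M * Ω e) * Mᵀ * (Mᵀ)⁻¹ := by rw [hkeyT]
    rwa [Matrix.mul_nonsing_inv_cancel_right _ _ hdMt,
      Matrix.mul_nonsing_inv_cancel_right _ _ hdMt] at h1
  -- scalar consequence
  have hscalar : ∀ k, Ωt e i i * M i k * Ω f k k = Ωt f i i * M i k * Ω e k k := by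
    intro k
    have h := congrFun (congrFun hkey i) k
    rw [mul_diag_entry (hΩ f).1, mul_diag_entry (hΩ e).1,
      diag_mul_entry (hΩt e).1, diag_mul_entry (hΩt f).1] at h
    exact h
  have hstar : Ωt e i i * Ω f i i = Ωt f i i * Ω e i i := by
    have h := hscalar i
    exact mul_right_cancel₀ hMii (by linear_combination h)
  -- row i of M is supported on {i}
  have hrowzero : ∀ j, j ≠ i → M i j = 0 := by
    intro j hj
    by_contra hMij
    have h := hscalar j
    have h3 : Ωt e i i * Ω f j j = Ωt f i i * Ω e j j :=
      mul_right_cancel₀ hMij (by linear_combination h)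
    have hjj : Ω e j j ≠ Ω f j j := by
      intro hjeq
      have hfj : Ω f j j ≠ 0 := ne_of_gt ((hΩ f).2 j)
      have ht : Ωt e i i = Ωt f i i := by
        apply mul_right_cancel₀ hfj
        rw [h3, hjeq]
      rw [ht] at hstar
      have : Ω f i i = Ω e i i := mul_left_cancel₀ (ne_of_gt ((hΩt f).2 i)) hstar
      exact hef this.symm
    have hne := hhet e f i j (Ne.symm hj) hef hjj
    apply hne
    rw [div_eq_div_iff (ne_of_gt ((hΩ f).2 i)) (ne_of_gt ((hΩ f).2 j))]
    have h4 : Ωt f i i * (Ω e i i * Ω f j j) = Ωt f i i * (Ω e j j * Ω f i i) := by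
      calc Ωt f i i * (Ω e i i * Ω f j j) = (Ωt f i i * Ω e i i) * Ω f j j := by ring
        _ = (Ωt e i i * Ω f i i) * Ω f j j := by rw [hstar]
        _ = (Ωt e i i * Ω f j j) * Ω f i i := by ring
        _ = (Ωt f i i * Ω e j j) * Ω f i i := by rw [h3]
        _ = Ωt f i i * (Ω e j j * Ω f i i) := by ring
    exact mul_left_cancel₀ (ne_of_gt ((hΩt f).2 i)) h4
  -- row i of M * (1 - B)
  have hsum : ∀ j, (M * (1 - B)) i j = M i i * (1 - B) i j := by
    intro j
    rw [Matrix.mul_apply]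
    refine Finset.sum_eq_single i (fun k _ hk => by rw [hrowzero k hk, zero_mul]) (by simp)
  have hMii1 : M i i = 1 := by
    have h := congrFun (congrFun hMB i) i
    rw [hsum i] at h
    simpa [Matrix.sub_apply, Matrix.one_apply, dag_diag_zero hB, dag_diag_zero hBt] using h
  funext j
  have h := congrFun (congrFun hMB i) j
  rw [hsum j, hMii1, one_mul] at h
  simp only [Matrix.sub_apply] at h
  linarith
end

section
/- Let (B, Ω) be a model with underlying DAG G(B) (edge j → i whenever B_{ij} ≠ 0). Let 𝒟 be a DAG on [p] that contains all edges of G(B), except one edge j → i of G(B) which appears in 𝒟 with the reversed orientation i → j, and assume the edge i → j is covered in 𝒟, i.e., PA_𝒟(j) = PA_𝒟(i) ∪ {i}. Then there exist a matrix B' compatible with 𝒟 and a diagonal matrix Ω' with positive diagonal entries such that (I−B)⁻¹ Ω (I−B)⁻ᵀ = (I−B')⁻¹ Ω' (I−B')⁻ᵀ. -/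
open Matrix

variable {p : ℕ}

private lemma sum_support_pair {i j : Fin p} (hij : i ≠ j) (f : Fin p → ℝ)
    (h : ∀ k, k ≠ i → k ≠ j → f k = 0) : ∑ k, f k = f i + f j := by
  have hsub : ∑ k ∈ ({i, j} : Finset (Fin p)), f k = ∑ k, f k := by
    refine Finset.sum_subset (Finset.subset_univ _) ?_
    intro k _ hk
    simp only [Finset.mem_insert, Finset.mem_singleton, not_or] at hk
    exact h k hk.1 hk.2
  rw [← hsub, Finset.sum_pair hij]

/-- The covered-edge-reversal transformation matrix. -/
noncomputable def Mmat (i j : Fin p) (b β : ℝ) : Matrix (Fin p) (Fin p) ℝ :=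
  Matrix.of fun a c =>
    if a = i then (if c = i then 1 else if c = j then b else 0)
    else if a = j then (if c = i then -β else if c = j then 1 - β * b else 0)
    else if a = c then 1 else 0

lemma Mmat_mul_apply {i j : Fin p} (hij : i ≠ j) (b β : ℝ)
    (X : Matrix (Fin p) (Fin p) ℝ) (a c : Fin p) :
    (Mmat i j b β * X) a c =
      if a = i then X i c + b * X j c
      else if a = j then -β * X i c + (1 - β * b) * X j c
      else X a c := by
  rw [Matrix.mul_apply]
  rcases eq_or_ne a i with rfl | hai
  · rw [sum_support_pair hij (fun k => Mmat a j b β a k * X k c)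
      (fun k h1 h2 => by simp [Mmat, h1, h2])]
    simp [Mmat, hij.symm]
  · rcases eq_or_ne a j with rfl | haj
    · rw [sum_support_pair hij (fun k => Mmat i a b β a k * X k c)
        (fun k h1 h2 => by simp [Mmat, h1, h2, hij.symm])]
      simp [Mmat, hij, hij.symm]
    · rw [Fintype.sum_eq_single a (fun k hk => by simp [Mmat, hai, haj, hk, Ne.symm hk])]
      simp [Mmat, hai, haj]

lemma mul_Mmat_transpose_apply {i j : Fin p} (hij : i ≠ j) (b β : ℝ)
    (X : Matrix (Fin p) (Fin p) ℝ) (a c : Fin p) :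
    (X * (Mmat i j b β)ᵀ) a c =
      if c = i then X a i + b * X a j
      else if c = j then -β * X a i + (1 - β * b) * X a j
      else X a c := by
  rw [Matrix.mul_apply]
  simp only [Matrix.transpose_apply]
  rcases eq_or_ne c i with rfl | hci
  · rw [sum_support_pair hij (fun k => X a k * Mmat c j b β c k)
      (fun k h1 h2 => by simp [Mmat, h1, h2])]
    simp [Mmat, hij.symm]
    ring
  · rcases eq_or_ne c j with rfl | hcj
    · rw [sum_support_pair hij (fun k => X a k * Mmat i c b β c k)
        (fun k h1 h2 => by simp [Mmat, h1, h2, hij.symm])]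
      simp [Mmat, hij, hij.symm]
      ring
    · rw [Fintype.sum_eq_single c (fun k hk => by simp [Mmat, hci, hcj, hk, Ne.symm hk])]
      simp [Mmat, hci, hcj]

lemma Mmat_mul_symm {i j : Fin p} (hij : i ≠ j) (b β : ℝ) :
    Mmat i j b β * Mmat j i β b = 1 := by
  ext a c
  rw [Mmat_mul_apply hij b β, Matrix.one_apply]
  by_cases hai : a = i <;> by_cases haj : a = j <;>
    by_cases hci : c = i <;> by_cases hcj : c = j <;>
    simp_all [Mmat, eq_comm] <;> ring

lemma Mmat_conj_diag {i j : Fin p} (hij : i ≠ j) (b β : ℝ) (d : Fin p → ℝ)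
    (hcross : -β * d i + b * d j * (1 - β * b) = 0) :
    Mmat i j b β * Matrix.diagonal d * (Mmat i j b β)ᵀ =
      Matrix.diagonal (fun k => if k = i then d i + b * b * d j
        else if k = j then β * β * d i + (1 - β * b) * (1 - β * b) * d j else d k) := by
  ext a c
  rw [mul_Mmat_transpose_apply hij, Matrix.diagonal_apply]
  simp only [Matrix.mul_diagonal]
  by_cases hai : a = i
  · by_cases hci : c = i
    · simp [Mmat, hai, hci, hij, hij.symm]
      ring
    · by_cases hcj : c = j
      · simp only [hai, hcj, if_pos rfl, if_neg hci, if_neg hij, if_neg hij.symm, Mmat,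
          Matrix.of_apply]
        simp [hij, hij.symm]
        linear_combination hcross
      · simp [Mmat, hai, hci, hcj, hij, hij.symm, Ne.symm hci, Ne.symm hcj]
  · by_cases haj : a = j
    · by_cases hci : c = i
      · simp only [haj, hci, if_pos rfl, Mmat, Matrix.of_apply]
        simp [hij, hij.symm, hai]
        linear_combination hcross
      · by_cases hcj : c = j
        · simp [Mmat, haj, hcj, hij, hij.symm]
          ring
        · simp [Mmat, haj, hci, hcj, hij, hij.symm, Ne.symm hci, Ne.symm hcj]
    · by_cases hci : c = i
      · simp [Mmat, hai, haj, hci, hij, hij.symm]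
      · by_cases hcj : c = j
        · simp [Mmat, hai, haj, hcj, hij, hij.symm]
        · by_cases hac : a = c
          · simp [Mmat, hai, haj, hci, hcj, hac]
          · simp [Mmat, hai, haj, hci, hcj, hac, Ne.symm hac]

/-- Covered edge reversal case: let `𝒟` contain all edges of `G(B)` except the edge
`j → i` of `G(B)`, which appears in `𝒟` reversed as `i → j` and is covered in `𝒟`
(`PA_𝒟(j) = PA_𝒟(i) ∪ {i}`). Then there is a model `(B', Ω')` with `B'` compatible
with `𝒟` entailing the same covariance. -/
theorem covered_edge_reversal_distribution_equivalent
    {p : ℕ} (B Ω : Matrix (Fin p) (Fin p) ℝ)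
    (hB : IsDagMatrix B) (hΩ : DiagPos Ω)
    (D : Fin p → Fin p → Prop) (hD : IsAcyclic D)
    (i j : Fin p) (hedge : B i j ≠ 0)
    (hrev : D i j) (hnot : ¬ D j i)
    (hcontain : ∀ a b : Fin p, graphOf B a b → (a = j ∧ b = i) ∨ D a b)
    (hcov : {k : Fin p | D k j} = insert i {k : Fin p | D k i}) :
    ∃ B' Ω' : Matrix (Fin p) (Fin p) ℝ,
      Compatible B' D ∧ DiagPos Ω' ∧ CovOf B Ω = CovOf B' Ω' := by
  obtain ⟨σ, hσ⟩ := hB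
  obtain ⟨hdiag, hpos⟩ := hΩ
  have hij : i ≠ j := by rintro rfl; exact hedge (hσ i i le_rfl)
  have hBji : B j i = 0 := hσ j i (le_of_not_ge (fun h => hedge (hσ i j h)))
  have hBii : B i i = 0 := hσ i i le_rfl
  have hBjj : B j j = 0 := hσ j j le_rfl
  have hcov' : ∀ k, D k j ↔ (k = i ∨ D k i) := by
    intro k
    have := Set.ext_iff.mp hcov k
    simpa using this
  set d : Fin p → ℝ := fun k => Ω k k with hd
  have hΩd : Ω = Matrix.diagonal d := by
    ext a c
    rcases eq_or_ne a c with rfl | h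
    · simp [Matrix.diagonal_apply, d]
    · simp [Matrix.diagonal_apply, h, hdiag h]
  set b : ℝ := B i j with hbdef
  have hdi : 0 < d i := hpos i
  have hdj : 0 < d j := hpos j
  set s : ℝ := d i + b * b * d j with hsdef
  have hbbdj : 0 ≤ b * b * d j := mul_nonneg (mul_self_nonneg b) hdj.le
  have hs : 0 < s := by rw [hsdef]; linarith
  set β : ℝ := b * d j / s with hβdef
  have hcross : -β * d i + b * d j * (1 - β * b) = 0 := by
    rw [hβdef]
    field_simp
    ring
  have h1mβb : 1 - β * b = d i / s := by
    rw [hβdef]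
    field_simp
    ring
  set M := Mmat i j b β with hM
  set N := Mmat j i β b with hN
  have hMN : M * N = 1 := Mmat_mul_symm hij b β
  have hNM : N * M = 1 := Mmat_mul_symm hij.symm β b
  refine ⟨1 - M * (1 - B), M * Ω * Mᵀ, ?_, ?_, ?_⟩
  · -- Compatibility with D
    intro a c hne
    have hent : (1 - M * (1 - B)) a c
        = (if a = c then (1:ℝ) else 0) - (M * (1 - B)) a c := by
      simp [Matrix.sub_apply, Matrix.one_apply]
    rw [hent, hM, Mmat_mul_apply hij] at hne
    by_cases hai : a = i
    · rw [if_pos hai] at hne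
      by_cases hci : c = i
      · refine absurd ?_ hne
        simp [hai, hci, hij, hij.symm, Matrix.sub_apply, Matrix.one_apply, hBii, hBji]
        try ring
      · by_cases hcj : c = j
        · refine absurd ?_ hne
          simp [hai, hcj, hij, hij.symm, Matrix.sub_apply, Matrix.one_apply, hBjj, ← hbdef]
          try ring
        · have hne' : B i c ≠ 0 ∨ B j c ≠ 0 := by
            by_contra h
            push_neg at h
            refine hne ?_
            simp [hai, hci, hcj, Ne.symm hci, Ne.symm hcj, Matrix.sub_apply,
              Matrix.one_apply, h.1, h.2]
          rw [hai]
          rcases hne' with h | h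
          · rcases hcontain c i h with ⟨h1, _⟩ | h
            · exact absurd h1 hcj
            · exact h
          · rcases hcontain c j h with ⟨h1, _⟩ | h
            · exact absurd h1 hcj
            · rcases (hcov' c).mp h with h1 | h1
              · exact absurd h1 hci
              · exact h1
    · by_cases haj : a = j
      · rw [if_neg hai, if_pos haj] at hne
        by_cases hci : c = i
        · rw [haj, hci]; exact hrev
        · by_cases hcj : c = j
          · refine absurd ?_ hne
            simp [haj, hcj, hij, hij.symm, Matrix.sub_apply, Matrix.one_apply,
              hBjj, ← hbdef]
            try ring
          · have hne' : B i c ≠ 0 ∨ B j c ≠ 0 := by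
              by_contra h
              push_neg at h
              refine hne ?_
              simp [haj, hci, hcj, Ne.symm hci, Ne.symm hcj, Matrix.sub_apply,
                Matrix.one_apply, h.1, h.2]
            rw [haj]
            rcases hne' with h | h
            · rcases hcontain c i h with ⟨h1, _⟩ | h
              · exact absurd h1 hcj
              · exact (hcov' c).mpr (Or.inr h)
            · rcases hcontain c j h with ⟨h1, _⟩ | h
              · exact absurd h1 hcj
              · exact h
      · rw [if_neg hai, if_neg haj] at hne
        have hne' : B a c ≠ 0 := by
          intro h
          apply hne
          rcases eq_or_ne a c with rfl | hac
          · simp [Matrix.sub_apply, Matrix.one_apply, h]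
          · simp [Matrix.sub_apply, Matrix.one_apply, h, hac]
        rcases hcontain c a hne' with ⟨_, h2⟩ | h
        · exact absurd h2 hai
        · exact h
  · -- DiagPos Ω'
    rw [hΩd, hM, Mmat_conj_diag hij b β d hcross]
    refine ⟨Matrix.isDiag_diagonal _, ?_⟩
    intro k
    rw [Matrix.diagonal_apply_eq]
    by_cases hki : k = i
    · rw [if_pos hki]
      linarith
    · by_cases hkj : k = j
      · rw [if_neg hki, if_pos hkj]
        have h2 : 0 < (1 - β * b) * (1 - β * b) * d j := by
          rw [h1mβb]
          exact mul_pos (mul_pos (div_pos hdi hs) (div_pos hdi hs)) hdj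
        have h3 : 0 ≤ β * β * d i := mul_nonneg (mul_self_nonneg β) hdi.le
        linarith
      · rw [if_neg hki, if_neg hkj]
        exact hpos k
  · -- Covariance equality
    have hfact : 1 - (1 - M * (1 - B)) = M * (1 - B) := sub_sub_cancel 1 (M * (1 - B))
    have hMinv : M⁻¹ = N := Matrix.inv_eq_right_inv hMN
    have htr : Mᵀ * Nᵀ = 1 := by
      rw [← Matrix.transpose_mul, hNM, Matrix.transpose_one]
    unfold CovOf
    rw [hfact, Matrix.mul_inv_rev, hMinv, Matrix.transpose_mul]
    simp only [← Matrix.mul_assoc]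
    rw [Matrix.mul_assoc ((1 - B)⁻¹) N M, hNM, Matrix.mul_one,
      Matrix.mul_assoc ((1 - B)⁻¹ * Ω * Mᵀ) Nᵀ, ← Matrix.mul_assoc,
      Matrix.mul_assoc ((1 - B)⁻¹ * Ω) Mᵀ Nᵀ, htr, Matrix.mul_one]
end
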